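/- arXiv:quant-ph/9904108 — 3 statements merged into one kernel-verified Lean document; each statement's English description precedes it below -/
import Mathlib

section
/- Let G be a completely positive trace-preserving map on 2×2 matrices that is not constant on density matrices. If ρ is a one-qubit density matrix such that G(ρ) is a pure state, then ρ is itself a pure state. -/
open Matrix
open scoped ComplexOrder

/-- A density matrix on index type `n`: positive semidefinite with trace 1. -/
def IsDensity {n : Type*} [Fintype n] (ρ : Matrix n n ℂ) : Prop :=
  ρ.PosSemidef ∧ ρ.trace = 1

/-- The extension `G ⊗ I_M` of a superoperator `G` on 2×2 matrices, acting blockwise. -/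
def extendMap (G : Matrix (Fin 2) (Fin 2) ℂ →ₗ[ℂ] Matrix (Fin 2) (Fin 2) ℂ) (M : ℕ)
    (A : Matrix (Fin 2 × Fin M) (Fin 2 × Fin M) ℂ) : Matrix (Fin 2 × Fin M) (Fin 2 × Fin M) ℂ :=
  Matrix.of fun p q => G (Matrix.of fun a b => A (a, p.2) (b, q.2)) p.1 q.1

/-- `G` is completely positive: `G ⊗ I_M` preserves positive semidefiniteness for every `M`. -/
def IsCompletelyPositive (G : Matrix (Fin 2) (Fin 2) ℂ →ₗ[ℂ] Matrix (Fin 2) (Fin 2) ℂ) : Prop :=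
  ∀ (M : ℕ) (A : Matrix (Fin 2 × Fin M) (Fin 2 × Fin M) ℂ), A.PosSemidef → (extendMap G M A).PosSemidef

/-!
Since a density matrix has trace 1, Cayley–Hamilton gives `ρ² = ρ - det ρ • 1`, so `ρ` is pure iff
`det ρ = 0`. A mixed `ρ` (`det ρ > 0`) is interior: for every density `τ` the matrix
`(1 + ε) ρ - ε τ` is still a density for small `ε > 0`, so `ρ` lies in the open segment between `τ`
and another density. Positivity and trace preservation make `G` map densities to densities, and it
preserves open segments, so `G ρ` lies strictly between `G τ` and a density. Pure states are extreme:
on `2 × 2` matrices `det (a A + b B) = a det A + b det B - a b det (A - B)` when `a + b = 1`, and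
`det (A - B) ≤ 0` with equality only for `A = B` because `A - B` is traceless Hermitian. Hence
`G τ = G ρ` for every density `τ`.
-/

open scoped Topology

namespace Matrix

section CommRing

variable {R : Type*} [CommRing R]

theorem mul_self_fin_two (A : Matrix (Fin 2) (Fin 2) R) : A * A = A.trace • A - A.det • 1 := by
  ext i j
  fin_cases i <;> fin_cases j <;>
    simp [mul_apply, trace_fin_two, det_fin_two] <;> ring

theorem trace_mul_self_fin_two (A : Matrix (Fin 2) (Fin 2) R) :
    (A * A).trace = A.trace ^ 2 - 2 * A.det := by
  rw [mul_self_fin_two, trace_sub, trace_smul, trace_smul, trace_one]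
  simp only [smul_eq_mul, Fintype.card_fin, Nat.cast_ofNat]
  ring

theorem mul_self_eq_self_iff_det_eq_zero_of_trace_eq_one {A : Matrix (Fin 2) (Fin 2) R}
    (htr : A.trace = 1) : A * A = A ↔ A.det = 0 := by
  rw [mul_self_fin_two, htr, one_smul, sub_eq_self]
  exact ⟨fun h => by simpa using congrFun (congrFun h 0) 0, fun h => by rw [h, zero_smul]⟩

theorem det_smul_add_smul_fin_two (A B : Matrix (Fin 2) (Fin 2) R) {a b : R} (hab : a + b = 1) :
    (a • A + b • B).det = a * A.det + b * B.det - a * b * (A - B).det := by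
  simp only [det_fin_two, add_apply, smul_apply, sub_apply, smul_eq_mul]
  obtain rfl : b = 1 - a := by rw [← hab]; ring
  ring

end CommRing

theorem IsHermitian.isSelfAdjoint_det {R n : Type*} [CommRing R] [StarRing R] [Fintype n]
    [DecidableEq n] {A : Matrix n n R} (hA : A.IsHermitian) : IsSelfAdjoint A.det := by
  rw [IsSelfAdjoint, ← det_conjTranspose, hA.eq]

section RCLike

variable {𝕜 : Type*} [RCLike 𝕜] {A : Matrix (Fin 2) (Fin 2) 𝕜}

theorem IsHermitian.posSemidef_of_trace_nonneg_of_det_nonneg (hA : A.IsHermitian)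
    (htr : 0 ≤ A.trace) (hdet : 0 ≤ A.det) : A.PosSemidef := by
  rw [hA.trace_eq_sum_eigenvalues, Fin.sum_univ_two, ← RCLike.ofReal_add,
    RCLike.ofReal_nonneg] at htr
  rw [hA.det_eq_prod_eigenvalues, Fin.prod_univ_two, ← RCLike.ofReal_mul,
    RCLike.ofReal_nonneg] at hdet
  refine hA.posSemidef_iff_eigenvalues_nonneg.mpr fun i => ?_
  fin_cases i <;> dsimp <;> nlinarith

theorem IsHermitian.trace_conjTranspose_mul_self_of_trace_eq_zero (hA : A.IsHermitian)
    (htr : A.trace = 0) : (Aᴴ * A).trace = -2 * A.det := by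
  rw [hA.eq, trace_mul_self_fin_two, htr]
  ring

theorem IsHermitian.det_nonpos_of_trace_eq_zero (hA : A.IsHermitian) (htr : A.trace = 0) :
    A.det ≤ 0 := by
  have h := (posSemidef_conjTranspose_mul_self A).trace_nonneg
  rw [hA.trace_conjTranspose_mul_self_of_trace_eq_zero htr] at h
  have hdet : A.det = 2⁻¹ * -(-2 * A.det) := by field_simp
  rw [hdet]
  exact mul_nonpos_of_nonneg_of_nonpos (inv_nonneg.2 zero_le_two) (neg_nonpos.2 h)

theorem IsHermitian.eq_zero_of_trace_eq_zero_of_det_eq_zero (hA : A.IsHermitian)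
    (htr : A.trace = 0) (hdet : A.det = 0) : A = 0 := by
  rw [← trace_conjTranspose_mul_self_eq_zero_iff,
    hA.trace_conjTranspose_mul_self_of_trace_eq_zero htr, hdet, mul_zero]

end RCLike

end Matrix

namespace IsDensity

variable {ρ τ : Matrix (Fin 2) (Fin 2) ℂ}

theorem mem_extremePoints (hρ : IsDensity ρ) (hpure : ρ * ρ = ρ) :
    ρ ∈ Set.extremePoints ℝ {A | IsDensity A} := by
  refine ⟨hρ, fun A hA B hB ⟨a, b, ha, hb, hab, hcomb⟩ => ?_⟩
  have hdet : ρ.det = 0 := (mul_self_eq_self_iff_det_eq_zero_of_trace_eq_one hρ.2).1 hpure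
  have hAB : (A - B).IsHermitian := hA.1.1.sub hB.1.1
  have htrAB : (A - B).trace = 0 := by rw [trace_sub, hA.2, hB.2, sub_self]
  have hsplit := det_smul_add_smul_fin_two A B (a := (a : ℂ)) (b := b) (by exact_mod_cast hab)
  rw [Complex.coe_smul, Complex.coe_smul, hcomb, hdet, sub_eq_add_neg, eq_comm] at hsplit
  have hA' : 0 ≤ (a : ℂ) * A.det :=
    mul_nonneg (Complex.zero_le_real.2 ha.le) hA.1.det_nonneg
  have hB' : 0 ≤ (b : ℂ) * B.det :=
    mul_nonneg (Complex.zero_le_real.2 hb.le) hB.1.det_nonneg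
  have hAB' : 0 ≤ -((a : ℂ) * b * (A - B).det) :=
    neg_nonneg.2 <| mul_nonpos_of_nonneg_of_nonpos (by exact_mod_cast (mul_pos ha hb).le)
      (hAB.det_nonpos_of_trace_eq_zero htrAB)
  rw [add_eq_zero_iff_of_nonneg (add_nonneg hA' hB') hAB', neg_eq_zero] at hsplit
  have hdetAB : (A - B).det = 0 := by simpa [ha.ne', hb.ne'] using hsplit.2
  obtain rfl : A = B :=
    sub_eq_zero.1 (hAB.eq_zero_of_trace_eq_zero_of_det_eq_zero htrAB hdetAB)
  rw [← hcomb, ← add_smul, hab, one_smul]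

theorem exists_mem_openSegment (hρ : IsDensity ρ) (hdet : ρ.det ≠ 0) (hτ : IsDensity τ) :
    ∃ σ, IsDensity σ ∧ ρ ∈ openSegment ℝ τ σ := by
  set σ : ℝ → Matrix (Fin 2) (Fin 2) ℂ := fun ε => (1 + ε) • ρ - ε • τ with hσ
  have hpos : 0 < (σ 0).det.re := by
    simpa [hσ] using (Complex.pos_iff.1 (lt_of_le_of_ne hρ.1.det_nonneg hdet.symm)).1
  have hcont : Continuous fun ε => (σ ε).det.re := by fun_prop
  have hsmall : ∀ᶠ ε in 𝓝[>] (0 : ℝ), 0 < (σ ε).det.re ∧ 0 < ε :=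
    ((continuousAt_const.eventually_lt hcont.continuousAt hpos).filter_mono
      nhdsWithin_le_nhds).and self_mem_nhdsWithin
  obtain ⟨ε, hdetε, hε⟩ := hsmall.exists
  have hε' : (0 : ℝ) < 1 + ε := by positivity
  have hσH : (σ ε).IsHermitian :=
    (hρ.1.1.smul (IsSelfAdjoint.all _)).sub (hτ.1.1.smul (IsSelfAdjoint.all _))
  have hσtr : (σ ε).trace = 1 := by
    simp [hσ, trace_sub, trace_smul, hρ.2, hτ.2]
  have hσdet : 0 ≤ (σ ε).det :=
    Complex.nonneg_iff.2 ⟨hdetε.le, (Complex.conj_eq_iff_im.1 hσH.isSelfAdjoint_det).symm⟩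
  refine ⟨σ ε, ⟨hσH.posSemidef_of_trace_nonneg_of_det_nonneg (by simp [hσtr]) hσdet, hσtr⟩,
    ε / (1 + ε), 1 / (1 + ε), div_pos hε hε', div_pos one_pos hε', by field_simp; ring, ?_⟩
  rw [hσ, smul_sub, smul_smul, smul_smul, div_mul_cancel₀ _ hε'.ne', one_smul]
  module

end IsDensity

-- `G ρ` is `G ⊗ I_1` applied to `ρ ⊗ I_1`, up to reindexing `Fin 2 × Fin 1 ≃ Fin 2`.
theorem IsCompletelyPositive.isDensity_map
    {G : Matrix (Fin 2) (Fin 2) ℂ →ₗ[ℂ] Matrix (Fin 2) (Fin 2) ℂ} (hCP : IsCompletelyPositive G)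
    (hTP : ∀ ρ, IsDensity ρ → (G ρ).trace = 1) {ρ : Matrix (Fin 2) (Fin 2) ℂ}
    (hρ : IsDensity ρ) : IsDensity (G ρ) :=
  ⟨(hCP 1 (ρ.submatrix Prod.fst Prod.fst) (hρ.1.submatrix Prod.fst)).submatrix
    (fun a : Fin 2 => (a, (0 : Fin 1))), hTP ρ hρ⟩

theorem cptp_pure_preimage
    (G : Matrix (Fin 2) (Fin 2) ℂ →ₗ[ℂ] Matrix (Fin 2) (Fin 2) ℂ)
    (hCP : IsCompletelyPositive G)
    (hTP : ∀ ρ, IsDensity ρ → (G ρ).trace = 1)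
    (hNC : ¬ ∃ σ, ∀ ρ, IsDensity ρ → G ρ = σ)
    (ρ : Matrix (Fin 2) (Fin 2) ℂ) (hρ : IsDensity ρ)
    (hpure : G ρ * G ρ = G ρ) :
    ρ * ρ = ρ := by
  by_contra hmixed
  refine hNC ⟨G ρ, fun τ hτ => ?_⟩
  have hdet : ρ.det ≠ 0 := mt (mul_self_eq_self_iff_det_eq_zero_of_trace_eq_one hρ.2).2 hmixed
  obtain ⟨σ, hσ, hρσ⟩ := hρ.exists_mem_openSegment hdet hτ
  have hGρσ : G ρ ∈ openSegment ℝ (G τ) (G σ) := by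
    have h := Set.mem_image_of_mem (G.restrictScalars ℝ).toAffineMap hρσ
    rwa [image_openSegment] at h
  exact ((hCP.isDensity_map hTP hρ).mem_extremePoints hpure).2 (hCP.isDensity_map hTP hτ)
    (hCP.isDensity_map hTP hσ) hGρσ
end

section
/- Let G be a completely positive trace-preserving map on 2×2 matrices, and suppose there exists a completely positive trace-preserving map H on 2×2 matrices such that H ∘ G is the identity map. Then G is a unitary superoperator, i.e., there exists U ∈ U(2) with G(ρ) = U ρ U† for all ρ. -/
/-!
Let `ω = ∑ₘ |m m⟩` and let `C = (G ⊗ I)(|ω⟩⟨ω|)` be the Choi matrix of `G`. If `0 ≤ P ≤ C`, then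
`0 ≤ (H ⊗ I)(P) ≤ (H ⊗ I)(C) = |ω⟩⟨ω|`, and a positive matrix below a rank-one projector is a
multiple of it; since `G ⊗ I` inverts `H ⊗ I` (a one-sided inverse of an operator in finite
dimension is two-sided), `P` is a multiple of `C`. A positive matrix all of whose positive
minorants are multiples of it has rank at most one, so `C = |v⟩⟨v|`, which says that `G` is
conjugation by the reshaped vector `F a m = v (a, m)`. Trace preservation then forces `Fᴴ F = 1`.
-/

open Matrix
open scoped ComplexOrder

namespace Matrix

variable {𝕜 n : Type*} [RCLike 𝕜]

theorem exists_smul_vecMulVec_eq_vecMulVec {d : 𝕜} (hd : 0 ≤ d) (w : n → 𝕜) :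
    ∃ v : n → 𝕜, d • vecMulVec w (star w) = vecMulVec v (star v) := by
  obtain ⟨r, hr, rfl⟩ := RCLike.nonneg_iff_exists_ofReal.mp hd
  refine ⟨(√r : 𝕜) • w, ?_⟩
  rw [star_smul, smul_vecMulVec, vecMulVec_smul, smul_smul, RCLike.star_def, RCLike.conj_ofReal,
    ← RCLike.ofReal_mul, Real.mul_self_sqrt hr]

variable [Fintype n]

theorem PosSemidef.exists_eq_smul_vecMulVec_of_posSemidef_sub {P : Matrix n n 𝕜}
    (hP : P.PosSemidef) {v : n → 𝕜} (hvP : (vecMulVec v (star v) - P).PosSemidef) :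
    ∃ c : 𝕜, P = c • vecMulVec v (star v) := by
  classical
  have hker : ∀ x, star v ⬝ᵥ x = 0 → P *ᵥ x = 0 := fun x hx => by
    refine (hP.dotProduct_mulVec_zero_iff x).mp (le_antisymm ?_ (hP.dotProduct_mulVec_nonneg x))
    simpa [sub_mulVec, vecMulVec_mulVec, hx] using hvP.dotProduct_mulVec_nonneg x
  set s := star v ⬝ᵥ v with hs
  -- `P` vanishes on `v⟂`, so `P = P Q = Q P` for the projection `Q` onto `v`, and `P = Q P Q`.
  set Q := s⁻¹ • vecMulVec v (star v)
  have hQ : ∀ x, star v ⬝ᵥ (Q *ᵥ x) = star v ⬝ᵥ x := fun x => by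
    rcases eq_or_ne s 0 with hs0 | hs0
    · simp [dotProduct_star_self_eq_zero.mp hs0]
    · simp only [Q, smul_mulVec, vecMulVec_mulVec, dotProduct_smul, op_smul_eq_smul, smul_eq_mul,
        ← hs]
      field_simp
  have hQ_herm : Qᴴ = Q := by
    simp [Q, conjTranspose_smul, conjTranspose_vecMulVec, hs, ← star_dotProduct]
  have hPQ : P * Q = P := ext_of_mulVec_single fun i => by
    rw [← mulVec_mulVec, ← sub_eq_zero, ← mulVec_sub]
    exact hker _ (by rw [dotProduct_sub, hQ, sub_self])
  have hQP : Q * P = P := by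
    simpa [hP.1.eq, hQ_herm] using congrArg (·ᴴ) hPQ
  refine ⟨s⁻¹ * (s⁻¹ * (star v ⬝ᵥ P *ᵥ v)), ?_⟩
  calc P = Q * (P * Q) := by rw [hPQ, hQP]
    _ = _ := by
      simp only [Q, mul_smul_comm, smul_mul_assoc, mul_vecMulVec, vecMulVec_mulVec,
        op_smul_eq_smul, smul_vecMulVec, smul_smul]

theorem PosSemidef.exists_eq_vecMulVec_of_forall_eq_smul {C : Matrix n n 𝕜} (hC : C.PosSemidef)
    (hext : ∀ P : Matrix n n 𝕜, P.PosSemidef → (C - P).PosSemidef → ∃ c : 𝕜, P = c • C) :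
    ∃ v : n → 𝕜, C = vecMulVec v (star v) := by
  obtain ⟨m, w, hCw⟩ := posSemidef_iff_eq_sum_vecMulVec.mp hC
  by_cases hw : ∀ i, w i = 0
  · exact ⟨0, by simp [hCw, hw]⟩
  push Not at hw
  obtain ⟨i, hi⟩ := hw
  have hrest : (C - vecMulVec (w i) (star (w i))).PosSemidef := by
    rw [hCw, ← Finset.sum_erase_eq_sub (Finset.mem_univ i)]
    exact posSemidef_sum _ fun j _ => posSemidef_vecMulVec_self_star (w j)
  obtain ⟨c, hc⟩ := hext _ (posSemidef_vecMulVec_self_star _) hrest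
  have hc0 : c ≠ 0 := by
    rintro rfl
    simp_all
  have hCc : C = c⁻¹ • vecMulVec (w i) (star (w i)) := by
    rw [hc, smul_smul, inv_mul_cancel₀ hc0, one_smul]
  -- `0 ≤ tr C = c⁻¹ ‖w i‖²`
  have hnonneg : 0 ≤ c⁻¹ := by
    have htr := hC.trace_nonneg
    rw [hCc, trace_smul, trace_vecMulVec, smul_eq_mul] at htr
    have ht := dotProduct_self_star_pos_iff.mpr hi
    simpa [ht.ne'] using div_nonneg htr ht.le
  rw [hCc]
  exact exists_smul_vecMulVec_eq_vecMulVec hnonneg _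

theorem conjTranspose_mul_self_eq_one_of_forall_trace {R : Type*} [DecidableEq n] [CommSemiring R]
    [StarRing R] {F : Matrix n n R}
    (h : ∀ ρ : Matrix n n R, (F * ρ * Fᴴ).trace = ρ.trace) : Fᴴ * F = 1 := by
  ext i j
  have := h (single j i 1)
  rw [mul_assoc, trace_mul_comm, mul_assoc, trace_single_mul] at this
  rcases eq_or_ne i j with rfl | hij
  · simpa using this
  · simpa [trace_single_eq_of_ne _ _ _ hij.symm, hij] using this

end Matrix

section Choi

variable (G H : Matrix (Fin 2) (Fin 2) ℂ →ₗ[ℂ] Matrix (Fin 2) (Fin 2) ℂ) {M : ℕ}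

theorem extendMap_sub (A B : Matrix (Fin 2 × Fin M) (Fin 2 × Fin M) ℂ) :
    extendMap G M (A - B) = extendMap G M A - extendMap G M B := by
  ext p q
  rw [Matrix.sub_apply]
  show G _ p.1 q.1 = G _ p.1 q.1 - G _ p.1 q.1
  rw [← Matrix.sub_apply, ← map_sub]
  rfl

theorem extendMap_smul (c : ℂ) (A : Matrix (Fin 2 × Fin M) (Fin 2 × Fin M) ℂ) :
    extendMap G M (c • A) = c • extendMap G M A := by
  ext p q
  rw [Matrix.smul_apply]
  show G _ p.1 q.1 = c • G _ p.1 q.1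
  rw [← Matrix.smul_apply, ← LinearMap.map_smul]
  rfl

variable {G H} in
theorem extendMap_extendMap (hHG : Function.LeftInverse H G)
    (A : Matrix (Fin 2 × Fin M) (Fin 2 × Fin M) ℂ) :
    extendMap H M (extendMap G M A) = A := by
  ext p q
  show H (G (of fun a b => A (a, p.2) (b, q.2))) p.1 q.1 = A p q
  rw [hHG]
  rfl

def maxEntangled : Fin 2 × Fin 2 → ℂ := fun p => if p.1 = p.2 then 1 else 0

def choiMatrix : Matrix (Fin 2 × Fin 2) (Fin 2 × Fin 2) ℂ :=
  extendMap G 2 (vecMulVec maxEntangled (star maxEntangled))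

theorem choiMatrix_apply (a b m n : Fin 2) :
    choiMatrix G (a, m) (b, n) = G (single m n 1) a b := by
  have hblock : (of fun c d => vecMulVec maxEntangled (star maxEntangled) (c, m) (d, n)) =
      single m n 1 := by
    ext c d
    simp [maxEntangled, vecMulVec_apply, single_apply, eq_comm, ← ite_and, and_comm]
  exact congr($(congrArg G hblock) a b)

theorem eq_conj_of_choiMatrix_eq_vecMulVec {v : Fin 2 × Fin 2 → ℂ}
    (hv : choiMatrix G = vecMulVec v (star v)) (ρ : Matrix (Fin 2) (Fin 2) ℂ) :
    G ρ = of (fun a m => v (a, m)) * ρ * (of fun a m => v (a, m))ᴴ := by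
  set F : Matrix (Fin 2) (Fin 2) ℂ := of fun a m => v (a, m)
  have : G = LinearMap.mulLeft ℂ F ∘ₗ LinearMap.mulRight ℂ Fᴴ :=
    ext_linearMap ℂ fun m n => LinearMap.ext_ring <| ext fun a b => by
      fin_cases m <;> fin_cases n <;>
        simp [← choiMatrix_apply, hv, F, mul_apply, single_apply, vecMulVec_apply]
  simp [this, mul_assoc]

variable {G H} in
theorem exists_eq_smul_choiMatrix_of_posSemidef (hCPH : IsCompletelyPositive H)
    (hHG : Function.LeftInverse H G) (hGH : Function.LeftInverse G H)
    {P : Matrix (Fin 2 × Fin 2) (Fin 2 × Fin 2) ℂ} (hP : P.PosSemidef)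
    (hPC : (choiMatrix G - P).PosSemidef) : ∃ c : ℂ, P = c • choiMatrix G := by
  have hΩ := extendMap_extendMap hHG (vecMulVec maxEntangled (star maxEntangled))
  obtain ⟨c, hc⟩ := (hCPH 2 P hP).exists_eq_smul_vecMulVec_of_posSemidef_sub (v := maxEntangled)
    (by rw [← hΩ, ← extendMap_sub]; exact hCPH 2 _ hPC)
  refine ⟨c, ?_⟩
  rw [← extendMap_extendMap hGH P, hc, extendMap_smul]
  rfl

end Choi

theorem cptp_left_inverse_unitary_general
    (G H : Matrix (Fin 2) (Fin 2) ℂ →ₗ[ℂ] Matrix (Fin 2) (Fin 2) ℂ)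
    (hCPG : IsCompletelyPositive G) (hCPH : IsCompletelyPositive H)
    (hTPG : ∀ A : Matrix (Fin 2) (Fin 2) ℂ, (G A).trace = A.trace)
    (hinv : ∀ A : Matrix (Fin 2) (Fin 2) ℂ, H (G A) = A) :
    ∃ U : Matrix (Fin 2) (Fin 2) ℂ, U ∈ Matrix.unitaryGroup (Fin 2) ℂ ∧
      ∀ ρ : Matrix (Fin 2) (Fin 2) ℂ, G ρ = U * ρ * Uᴴ := by
  have hGH : Function.LeftInverse G H :=
    LinearMap.congr_fun (mul_eq_one_comm.mp (LinearMap.ext hinv : H * G = 1))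
  have hC : (choiMatrix G).PosSemidef := hCPG 2 _ (posSemidef_vecMulVec_self_star _)
  obtain ⟨v, hv⟩ := hC.exists_eq_vecMulVec_of_forall_eq_smul
    fun P hP hPC => exists_eq_smul_choiMatrix_of_posSemidef hCPH hinv hGH hP hPC
  have hG := eq_conj_of_choiMatrix_eq_vecMulVec G hv
  exact ⟨_, mem_unitaryGroup_iff'.mpr
    (conjTranspose_mul_self_eq_one_of_forall_trace fun ρ => by rw [← hG, hTPG]), hG⟩

theorem cptp_left_inverse_unitary
    (G H : Matrix (Fin 2) (Fin 2) ℂ →ₗ[ℂ] Matrix (Fin 2) (Fin 2) ℂ)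
    (hCPG : IsCompletelyPositive G) (hCPH : IsCompletelyPositive H)
    (hTPG : ∀ A : Matrix (Fin 2) (Fin 2) ℂ, (G A).trace = A.trace)
    (hTPH : ∀ A : Matrix (Fin 2) (Fin 2) ℂ, (H A).trace = A.trace)
    (hinv : ∀ A : Matrix (Fin 2) (Fin 2) ℂ, H (G A) = A) :
    ∃ U : Matrix (Fin 2) (Fin 2) ℂ, U ∈ Matrix.unitaryGroup (Fin 2) ℂ ∧
      ∀ ρ : Matrix (Fin 2) (Fin 2) ℂ, G ρ = U * ρ * Uᴴ :=
  cptp_left_inverse_unitary_general G H hCPG hCPH hTPG hinv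
end

section
/- Let ρ₁, ρ₂, ρ₃ be three distinct one-qubit pure-state density matrices whose Bloch vectors lie on a plane through the origin of ℝ³. If G is a completely positive trace-preserving map on 2×2 matrices that fixes ρ₁, ρ₂, and ρ₃, then G is the identity map (for n = 1). -/
open Matrix
open scoped ComplexOrder

/-- The Bloch matrix (1/2)[[1+z, x−iy],[x+iy, 1−z]]. -/
noncomputable def blochMat (x y z : ℝ) : Matrix (Fin 2) (Fin 2) ℂ :=
  (1 / 2 : ℂ) • !![((1 + z : ℝ) : ℂ), (x : ℂ) - y * Complex.I;
                   (x : ℂ) + y * Complex.I, ((1 - z : ℝ) : ℂ)]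

/-! The Bloch vectors `vᵢ` of three distinct pure states are affinely independent (they lie on a
sphere), so the vectors `(1, vᵢ)` and `(0, n)`, with `n` a unit normal of their plane, span `ℝ⁴`:
the fixed states span the identity and every `w · σ` with `w ⊥ n`. Hence `G` differs from the
identity only through `G σₙ`, where `σₙ = n · σ`, and `G σₙ = m · σ` with `|m| ≤ 1` because `G`
maps the pure state `(1 + σₙ)/2` to a state. Complete positivity, tested on the maximally entangled
state against `vec σₙ`, gives `n · m ≥ 1`, which forces `m = n`. -/

open Complex

noncomputable section

-- `pauliDot w = w · σ = w₀ σₓ + w₁ σᵧ + w₂ σ_z`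
def pauliDot : (Fin 3 → ℂ) →ₗ[ℂ] Matrix (Fin 2) (Fin 2) ℂ where
  toFun w := !![w 2, w 0 - I * w 1; w 0 + I * w 1, -w 2]
  map_add' w w' := by ext i j; fin_cases i <;> fin_cases j <;> simp <;> ring
  map_smul' c w := by ext i j; fin_cases i <;> fin_cases j <;> simp <;> ring

lemma pauliDot_apply (w : Fin 3 → ℂ) :
    pauliDot w = !![w 2, w 0 - I * w 1; w 0 + I * w 1, -w 2] := rfl

-- `pauliCoord X k = tr (σₖ X) / 2`
def pauliCoord (X : Matrix (Fin 2) (Fin 2) ℂ) : Fin 3 → ℂ :=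
  ![(X 0 1 + X 1 0) / 2, I * (X 0 1 - X 1 0) / 2, (X 0 0 - X 1 1) / 2]

lemma half_trace_smul_one_add_pauliDot_pauliCoord (X : Matrix (Fin 2) (Fin 2) ℂ) :
    (X.trace / 2) • 1 + pauliDot (pauliCoord X) = X := by
  ext i j
  fin_cases i <;> fin_cases j <;> simp [pauliDot_apply, pauliCoord, trace_fin_two] <;>
    ring_nf <;> simp [I_sq] <;> ring

lemma blochMat_eq_smul_one_add_pauliDot (w : Fin 3 → ℝ) :
    blochMat (w 0) (w 1) (w 2) = (1 / 2 : ℂ) • (1 + pauliDot (ofReal ∘ w)) := by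
  ext i j
  fin_cases i <;> fin_cases j <;> simp [blochMat, pauliDot_apply] <;> ring

lemma trace_blochMat (x y z : ℝ) : (blochMat x y z).trace = 1 := by
  simp [blochMat, trace_fin_two]
  ring

lemma dotProduct_blochMat_mulVec (x y z : ℝ) (u : Fin 2 → ℂ) :
    star u ⬝ᵥ (blochMat x y z *ᵥ u) =
      (((1 + z) * normSq (u 0) + (1 - z) * normSq (u 1)) / 2
        + (x * ((u 0).re * (u 1).re + (u 0).im * (u 1).im)
          + y * ((u 0).re * (u 1).im - (u 0).im * (u 1).re)) : ℝ) := by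
  apply Complex.ext <;>
    simp [blochMat, dotProduct, mulVec, Fin.sum_univ_two, normSq_apply] <;> ring

lemma blochMat_posSemidef_iff (w : Fin 3 → ℝ) :
    (blochMat (w 0) (w 1) (w 2)).PosSemidef ↔ w ⬝ᵥ w ≤ 1 := by
  simp only [posSemidef_iff_dotProduct_mulVec, dotProduct_blochMat_mulVec, Complex.zero_le_real]
  simp only [dotProduct, Fin.sum_univ_three]
  set x := w 0
  set y := w 1
  set z := w 2
  constructor
  · rintro ⟨-, h⟩
    have h₁ := h ![(x : ℂ) - y * I, -(1 + z : ℂ)]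
    have h₂ := h ![(1 - z : ℂ), -((x : ℂ) + y * I)]
    simp [normSq_apply] at h₁ h₂
    nlinarith
  · intro hr
    refine ⟨?_, fun u => ?_⟩
    · ext i j
      fin_cases i <;> fin_cases j <;> simp [blochMat, Complex.ext_iff]
    · simp only [normSq_apply]
      set a := (u 0).re
      set b := (u 0).im
      set c := (u 1).re
      set d := (u 1).im
      -- Up to a factor, the form is the sum of these four squares plus `(1 - |w|²) ‖u‖²`.
      nlinarith [sq_nonneg ((1 + z) * a + x * c + y * d), sq_nonneg ((1 + z) * b + x * d - y * c),
        sq_nonneg (x * a - y * b + (1 - z) * c), sq_nonneg (x * b + y * a + (1 - z) * d),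
        mul_nonneg (sub_nonneg.mpr hr) (add_nonneg (add_nonneg (sq_nonneg a) (sq_nonneg b))
          (add_nonneg (sq_nonneg c) (sq_nonneg d)))]

lemma Matrix.IsHermitian.exists_blochMat_eq {ρ : Matrix (Fin 2) (Fin 2) ℂ}
    (hρ : ρ.IsHermitian) (htr : ρ.trace = 1) :
    ∃ w : Fin 3 → ℝ, ρ = blochMat (w 0) (w 1) (w 2) := by
  refine ⟨![2 * (ρ 1 0).re, 2 * (ρ 1 0).im, (ρ 0 0 - ρ 1 1).re], ?_⟩
  have h₀₀ := hρ.apply 0 0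
  have h₁₁ := hρ.apply 1 1
  have h₀₁ := hρ.apply 0 1
  rw [trace_fin_two] at htr
  ext i j
  fin_cases i <;> fin_cases j <;> simp [blochMat, Complex.ext_iff] at * <;> constructor <;> linarith

lemma affineIndependent_of_dotProduct_self_eq_one {ι : Type*} [Fintype ι]
    {v : Fin 3 → ι → ℝ} (hv : ∀ i, v i ⬝ᵥ v i = 1) (hinj : Function.Injective v) :
    AffineIndependent ℝ v := by
  let p : Fin 3 → EuclideanSpace ℝ ι := fun i => WithLp.toLp 2 (v i)
  have hsphere : EuclideanGeometry.Cospherical ({p 0, p 1, p 2} : Set _) := by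
    refine ⟨0, 1, ?_⟩
    simp only [Set.mem_insert_iff, Set.mem_singleton_iff]
    rintro _ (rfl | rfl | rfl) <;>
      simpa [p, EuclideanSpace.norm_eq, dotProduct, sq] using hv _
  have hp := hsphere.affineIndependent_of_ne
    (fun h => by simpa using hinj (WithLp.toLp_injective 2 h))
    (fun h => by simpa using hinj (WithLp.toLp_injective 2 h))
    (fun h => by simpa using hinj (WithLp.toLp_injective 2 h))
  have := hp.map' (WithLp.linearEquiv 2 ℝ (ι → ℝ)).toLinearMap.toAffineMap
    (WithLp.linearEquiv 2 ℝ (ι → ℝ)).injective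
  convert this using 1
  · rfl
  · funext i
    fin_cases i <;> rfl

lemma exists_sum_eq_and_sum_smul_eq {ι : Type*} [Fintype ι] {v : ι → ι → ℝ}
    (hv : AffineIndependent ℝ v) {n : ι → ℝ} (hn : n ≠ 0) (hnv : ∀ i, n ⬝ᵥ v i = 0)
    (t : ℝ) {w : ι → ℝ} (hw : n ⬝ᵥ w = 0) :
    ∃ c : ι → ℝ, ∑ i, c i = t ∧ ∑ i, c i • v i = w := by
  let f : (ι → ℝ) × ℝ →ₗ[ℝ] ℝ × (ι → ℝ) :=
    { toFun := fun p => (∑ i, p.1 i, ∑ i, p.1 i • v i + p.2 • n)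
      map_add' := fun p q => by
        simp only [Prod.fst_add, Prod.snd_add, Pi.add_apply, add_smul, Finset.sum_add_distrib,
          Prod.mk_add_mk]
        abel_nf
      map_smul' := fun r p => by
        simp [Finset.mul_sum, Finset.smul_sum, smul_smul, smul_add] }
  have hnn : n ⬝ᵥ n ≠ 0 := fun h => hn (dotProduct_self_eq_zero.mp h)
  have hsnd : ∀ p, n ⬝ᵥ (f p).2 = p.2 * (n ⬝ᵥ n) := fun p => by
    simp [f, dotProduct_add, dotProduct_sum, dotProduct_smul, hnv]
  have hinj : Function.Injective f := by
    refine (injective_iff_map_eq_zero f).mpr fun ⟨c, a⟩ h => ?_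
    have ha : a = 0 := by simpa [h, hnn] using hsnd (c, a)
    subst ha
    have hc := hv.eq_zero_of_sum_eq_zero (s := Finset.univ) (w := c)
      (by simpa [f] using congrArg Prod.fst h) (by simpa [f] using congrArg Prod.snd h)
    simp only [Prod.mk_eq_zero, and_true]
    exact funext fun i => hc i (Finset.mem_univ i)
  obtain ⟨⟨c, a⟩, hca⟩ :=
    (LinearMap.injective_iff_surjective_of_finrank_eq_finrank (by simp [add_comm])).mp hinj (t, w)
  have ha : a = 0 := by simpa [hca, hw, hnn] using hsnd (c, a)
  subst ha
  exact ⟨c, by simpa [f] using congrArg Prod.fst hca, by simpa [f] using congrArg Prod.snd hca⟩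

lemma exists_smul_dotProduct_self_eq_one {ι : Type*} [Fintype ι] {u : ι → ℝ} (hu : u ≠ 0) :
    ∃ r : ℝ, (r • u) ⬝ᵥ (r • u) = 1 := by
  have hpos : 0 < u ⬝ᵥ u :=
    lt_of_le_of_ne (Finset.sum_nonneg fun i _ => mul_self_nonneg (u i))
      (Ne.symm fun h => hu (dotProduct_self_eq_zero.mp h))
  refine ⟨(√(u ⬝ᵥ u))⁻¹, ?_⟩
  rw [smul_dotProduct, dotProduct_smul, smul_eq_mul, smul_eq_mul, ← mul_assoc, ← mul_inv,
    Real.mul_self_sqrt hpos.le, inv_mul_cancel₀ hpos.ne']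

lemma eq_of_one_le_dotProduct {ι : Type*} [Fintype ι] {m n : ι → ℝ} (hm : m ⬝ᵥ m ≤ 1)
    (hn : n ⬝ᵥ n = 1) (h : 1 ≤ n ⬝ᵥ m) : m = n := by
  have hnonneg : 0 ≤ (m - n) ⬝ᵥ (m - n) :=
    Finset.sum_nonneg fun i _ => mul_self_nonneg ((m - n) i)
  have hexpand : (m - n) ⬝ᵥ (m - n) = m ⬝ᵥ m - 2 * n ⬝ᵥ m + n ⬝ᵥ n := by
    simp only [sub_dotProduct, dotProduct_sub, dotProduct_comm m n]
    ring
  exact sub_eq_zero.mp (dotProduct_self_eq_zero.mp (by linarith))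

section LinearMap

variable {G : Matrix (Fin 2) (Fin 2) ℂ →ₗ[ℂ] Matrix (Fin 2) (Fin 2) ℂ}

lemma IsCompletelyPositive.posSemidef_map (hCP : IsCompletelyPositive G)
    {ρ : Matrix (Fin 2) (Fin 2) ℂ} (hρ : ρ.PosSemidef) : (G ρ).PosSemidef :=
  (hCP 1 _ (hρ.submatrix Prod.fst)).submatrix fun a => (a, 0)

lemma IsCompletelyPositive.choi_nonneg (hCP : IsCompletelyPositive G)
    (S : Matrix (Fin 2) (Fin 2) ℂ) :
    0 ≤ ∑ a, ∑ b, ∑ c, ∑ d, star (S a b) * G (single b d 1) a c * S c d := by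
  -- `Ω Ωᴴ` is the unnormalised maximally entangled state; `extendMap G 2` maps it to the Choi
  -- matrix of `G`, whose quadratic form at `vec S` is the sum above.
  let Ω : Fin 2 × Fin 2 → ℂ := fun p => if p.1 = p.2 then 1 else 0
  have h := (hCP 2 _ (posSemidef_vecMulVec_self_star Ω)).dotProduct_mulVec_nonneg
    fun p => S p.1 p.2
  have hblock : ∀ i j, (of fun a b => vecMulVec Ω (star Ω) (a, i) (b, j)) = single i j 1 := by
    intro i j
    ext a b
    simp only [Ω, vecMulVec, single_apply, of_apply, Pi.star_apply]
    by_cases ha : i = a <;> by_cases hb : j = b <;> simp [ha, hb, Ne.symm]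
  simp only [dotProduct, mulVec, extendMap, hblock, of_apply, Fintype.sum_prod_type,
    Finset.mul_sum, Pi.star_apply] at h
  simpa only [mul_assoc] using h

lemma IsCompletelyPositive.one_le_dotProduct (hCP : IsCompletelyPositive G)
    {n m : Fin 3 → ℝ} (hn : n ⬝ᵥ n = 1)
    (hG : ∀ X, G X = X + ((ofReal ∘ n) ⬝ᵥ pauliCoord X) •
      (pauliDot (ofReal ∘ m) - pauliDot (ofReal ∘ n))) :
    1 ≤ n ⬝ᵥ m := by
  have h := hCP.choi_nonneg (pauliDot (ofReal ∘ n))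
  -- `vec σₙ` is orthogonal to the maximally entangled vector since `tr σₙ = 0`, so only the
  -- perturbation of the identity contributes.
  have key : ∑ a, ∑ b, ∑ c, ∑ d, star (pauliDot (ofReal ∘ n) a b) * G (single b d 1) a c *
      pauliDot (ofReal ∘ n) c d = ((n ⬝ᵥ n * (n ⬝ᵥ m - n ⬝ᵥ n) : ℝ) : ℂ) := by
    simp only [hG, Fin.sum_univ_two]
    simp [pauliDot_apply, pauliCoord, dotProduct, Fin.sum_univ_three]
    apply Complex.ext <;> simp <;> ring
  rw [key, hn, Complex.zero_le_real] at h
  linarith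

lemma map_smul_one_add_pauliDot_eq_self {v : Fin 3 → Fin 3 → ℝ} (hv : AffineIndependent ℝ v)
    {n : Fin 3 → ℝ} (hn : n ≠ 0) (hnv : ∀ i, n ⬝ᵥ v i = 0)
    (hfix : ∀ i, G (blochMat (v i 0) (v i 1) (v i 2)) = blochMat (v i 0) (v i 1) (v i 2))
    (t : ℂ) {w : Fin 3 → ℂ} (hw : (ofReal ∘ n) ⬝ᵥ w = 0) :
    G (t • 1 + pauliDot w) = t • 1 + pauliDot w := by
  let F := LinearMap.eqLocus G LinearMap.id
  have hreal : ∀ (s : ℝ) (u : Fin 3 → ℝ), n ⬝ᵥ u = 0 →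
      (s : ℂ) • 1 + pauliDot (ofReal ∘ u) ∈ F := by
    intro s u hu
    obtain ⟨c, rfl, rfl⟩ := exists_sum_eq_and_sum_smul_eq hv hn hnv s hu
    have hsum : (↑(∑ i, c i) : ℂ) • 1 + pauliDot (ofReal ∘ ∑ i, c i • v i)
        = ∑ i, (c i : ℂ) • (2 : ℂ) • blochMat (v i 0) (v i 1) (v i 2) := by
      have : ofReal ∘ ∑ i, c i • v i = ∑ i, (c i : ℂ) • (ofReal ∘ v i) := by
        funext k
        simp [Finset.sum_apply]
      simp [blochMat_eq_smul_one_add_pauliDot, this, map_sum, Finset.sum_add_distrib,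
        Finset.sum_smul, smul_add]
    rw [hsum]
    exact F.sum_mem fun i _ => F.smul_mem _ (F.smul_mem _ (hfix i))
  have hre : n ⬝ᵥ (re ∘ w) = 0 := by simpa [dotProduct] using congrArg re hw
  have him : n ⬝ᵥ (im ∘ w) = 0 := by simpa [dotProduct] using congrArg im hw
  have hsplit : t • 1 + pauliDot w = ((t.re : ℂ) • 1 + pauliDot (ofReal ∘ re ∘ w))
      + I • ((t.im : ℂ) • 1 + pauliDot (ofReal ∘ im ∘ w)) := by
    ext i j
    fin_cases i <;> fin_cases j <;> simp [pauliDot_apply, Complex.ext_iff] <;> ring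
  change t • 1 + pauliDot w ∈ F
  rw [hsplit]
  exact F.add_mem (hreal _ _ hre) (F.smul_mem _ (hreal _ _ him))

lemma map_eq_add_smul_sub {n : Fin 3 → ℝ} (hn : n ⬝ᵥ n = 1)
    (hfix : ∀ (t : ℂ) (w : Fin 3 → ℂ), (ofReal ∘ n) ⬝ᵥ w = 0 →
      G (t • 1 + pauliDot w) = t • 1 + pauliDot w)
    (X : Matrix (Fin 2) (Fin 2) ℂ) :
    G X = X + ((ofReal ∘ n) ⬝ᵥ pauliCoord X) •
      (G (pauliDot (ofReal ∘ n)) - pauliDot (ofReal ∘ n)) := by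
  set p := (ofReal ∘ n) ⬝ᵥ pauliCoord X
  have hn' : (ofReal ∘ n) ⬝ᵥ (ofReal ∘ n) = 1 := by
    simpa [dotProduct] using congrArg ofReal hn
  have hperp : (ofReal ∘ n) ⬝ᵥ (pauliCoord X - p • (ofReal ∘ n)) = 0 := by
    rw [dotProduct_sub, dotProduct_smul, hn', smul_eq_mul, mul_one, sub_self]
  have h := hfix (X.trace / 2) _ hperp
  rw [map_sub, map_smul, ← add_sub_assoc, half_trace_smul_one_add_pauliDot_pauliCoord, map_sub,
    map_smul] at h
  calc G X = (G X - p • G (pauliDot (ofReal ∘ n))) + p • G (pauliDot (ofReal ∘ n)) := by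
        abel
    _ = _ := by rw [h, smul_sub]; abel

lemma exists_map_pauliDot_eq (hpos : ∀ ρ, ρ.PosSemidef → (G ρ).PosSemidef)
    (hTP : ∀ A, (G A).trace = A.trace) (hG1 : G 1 = 1) {n : Fin 3 → ℝ} (hn : n ⬝ᵥ n ≤ 1) :
    ∃ m : Fin 3 → ℝ, G (pauliDot (ofReal ∘ n)) = pauliDot (ofReal ∘ m) ∧ m ⬝ᵥ m ≤ 1 := by
  have hρ := hpos _ ((blochMat_posSemidef_iff n).mpr hn)
  obtain ⟨m, hm⟩ := hρ.1.exists_blochMat_eq (by rw [hTP, trace_blochMat])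
  refine ⟨m, ?_, (blochMat_posSemidef_iff m).mp (hm ▸ hρ)⟩
  rw [blochMat_eq_smul_one_add_pauliDot, blochMat_eq_smul_one_add_pauliDot, map_smul, map_add,
    hG1] at hm
  exact add_left_cancel (smul_right_injective _ (by norm_num) hm)

end LinearMap
end

theorem cptp_fixing_three_pure_states_is_id
    (ρ : Fin 3 → Matrix (Fin 2) (Fin 2) ℂ) (v : Fin 3 → Fin 3 → ℝ)
    (hbloch : ∀ i, ρ i = blochMat (v i 0) (v i 1) (v i 2))
    (hpure : ∀ i, (v i 0) ^ 2 + (v i 1) ^ 2 + (v i 2) ^ 2 = 1)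
    (hdist : ∀ i j, i ≠ j → ρ i ≠ ρ j)
    (hplane : ∃ nrm : Fin 3 → ℝ, nrm ≠ 0 ∧ ∀ i, ∑ k, nrm k * v i k = 0)
    (G : Matrix (Fin 2) (Fin 2) ℂ →ₗ[ℂ] Matrix (Fin 2) (Fin 2) ℂ)
    (hCP : IsCompletelyPositive G)
    (hTP : ∀ A : Matrix (Fin 2) (Fin 2) ℂ, (G A).trace = A.trace)
    (hfix : ∀ i, G (ρ i) = ρ i) :
    ∀ A : Matrix (Fin 2) (Fin 2) ℂ, G A = A := by
  obtain ⟨nrm, hnrm, hnrmv⟩ := hplane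
  obtain ⟨r, hn⟩ := exists_smul_dotProduct_self_eq_one hnrm
  set n := r • nrm
  have hnv : ∀ i, n ⬝ᵥ v i = 0 := fun i => by
    rw [smul_dotProduct, dotProduct, hnrmv i, smul_zero]
  have hv : AffineIndependent ℝ v := by
    refine affineIndependent_of_dotProduct_self_eq_one
      (fun i => by simpa [dotProduct, Fin.sum_univ_three, sq] using hpure i) fun i j hij => ?_
    by_contra hne
    exact hdist i j hne (by rw [hbloch, hbloch, hij])
  have hfixPlane := map_smul_one_add_pauliDot_eq_self hv (fun h => by simp [h] at hn) hnv
    fun i => hbloch i ▸ hfix i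
  have hG1 : G 1 = 1 := by simpa using hfixPlane 1 (w := 0) (by simp)
  obtain ⟨m, hm, hm1⟩ := exists_map_pauliDot_eq (fun _ => hCP.posSemidef_map) hTP hG1 hn.le
  have hGX := map_eq_add_smul_sub hn hfixPlane
  rw [hm] at hGX
  have hmn := eq_of_one_le_dotProduct hm1 hn (hCP.one_le_dotProduct hn hGX)
  intro A
  rw [hGX A, hmn, sub_self, smul_zero, add_zero]
end
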